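/- arXiv:2103.08474 — 2 statements merged into one kernel-verified Lean document; each statement's English description precedes it below -/
import Mathlib

section
/- For real numbers x_1,...,x_r in [0,1] with x_1 = min_i x_i, and nonnegative integers n_1,...,n_r not all zero, one has 1 - ∏_{t=1}^r (1-x_t)^{n_t} ≥ x_1 + ∑_{i=2}^r (x_i - x_1) · n_i · (1-x_i)^{n_i-1} · ∏_{t≠i} (1-x_t)^{n_t}. -/
/-!
Put `b t = 1 - x t` and `d t = x t - x₁ ≥ 0`, so that `b t + d t = 1 - x₁` for every `t`.
Expanding `∏ (b t + d t) ^ n t` produces only nonnegative terms, and those of degree at most one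
in `d` are exactly `∏ b t ^ n t` plus the sum in the statement. Hence that quantity is at most
`(1 - x₁) ^ ∑ n t ≤ 1 - x₁`.
-/

open Finset

section OrderedSemiring

variable {R : Type*} [CommSemiring R] [PartialOrder R] [IsOrderedRing R]

theorem pow_add_mul_pow_sub_one_le_add_pow {b d : R} (hb : 0 ≤ b) (hd : 0 ≤ d) (n : ℕ) :
    b ^ n + d * n * b ^ (n - 1) ≤ (b + d) ^ n := by
  induction n with
  | zero => simp
  | succ k ih =>
    have hk : (k : R) * b ^ (k - 1) * b = k * b ^ k := by
      cases k with
      | zero => simp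
      | succ m => simp [pow_succ, mul_assoc]
    calc b ^ (k + 1) + d * ↑(k + 1) * b ^ (k + 1 - 1)
        = b ^ k * b + d * b ^ k + d * (k * b ^ (k - 1) * b) := by rw [hk]; push_cast; ring
      _ ≤ b ^ k * b + d * b ^ k + d * (k * b ^ (k - 1) * b) + d * k * b ^ (k - 1) * d :=
        le_add_of_nonneg_right (by positivity)
      _ = (b ^ k + d * k * b ^ (k - 1)) * (b + d) := by ring
      _ ≤ (b + d) ^ k * (b + d) := mul_le_mul_of_nonneg_right ih (add_nonneg hb hd)
      _ = (b + d) ^ (k + 1) := (pow_succ _ _).symm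

theorem prod_pow_add_sum_le_prod_add_pow {ι : Type*} [DecidableEq ι] {b d : ι → R}
    (hb : ∀ i, 0 ≤ b i) (hd : ∀ i, 0 ≤ d i) (n : ι → ℕ) (s : Finset ι) :
    ∏ t ∈ s, b t ^ n t +
        ∑ i ∈ s, d i * n i * b i ^ (n i - 1) * ∏ t ∈ s.erase i, b t ^ n t
      ≤ ∏ t ∈ s, (b t + d t) ^ n t := by
  induction s using Finset.induction_on with
  | empty => simp
  | @insert u s hu ih =>
    set P := ∏ t ∈ s, b t ^ n t
    set S := ∑ i ∈ s, d i * n i * b i ^ (n i - 1) * ∏ t ∈ s.erase i, b t ^ n t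
    have hS : 0 ≤ S := sum_nonneg fun i _ ↦ by
      have := hb i; have := hd i
      have : 0 ≤ ∏ t ∈ s.erase i, b t ^ n t := prod_nonneg fun t _ ↦ pow_nonneg (hb t) _
      positivity
    have hP : 0 ≤ P := prod_nonneg fun t _ ↦ pow_nonneg (hb t) _
    have hsum : ∑ i ∈ s, d i * n i * b i ^ (n i - 1) * ∏ t ∈ (insert u s).erase i, b t ^ n t
        = b u ^ n u * S := by
      rw [mul_sum]
      refine sum_congr rfl fun i hi ↦ ?_
      rw [erase_insert_of_ne (ne_of_mem_of_not_mem hi hu).symm,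
        prod_insert fun h ↦ hu (mem_of_mem_erase h)]
      ring
    have hbu := hb u
    have hdu := hd u
    rw [prod_insert hu, sum_insert hu, erase_insert hu, hsum, prod_insert hu]
    calc b u ^ n u * P + (d u * n u * b u ^ (n u - 1) * P + b u ^ n u * S)
        = (b u ^ n u + d u * n u * b u ^ (n u - 1)) * P + b u ^ n u * S := by ring
      _ ≤ (b u + d u) ^ n u * P + (b u + d u) ^ n u * S := by
        gcongr
        · exact pow_add_mul_pow_sub_one_le_add_pow hbu hdu _
        · exact le_add_of_nonneg_right hdu
      _ = (b u + d u) ^ n u * (P + S) := by ring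
      _ ≤ (b u + d u) ^ n u * ∏ t ∈ s, (b t + d t) ^ n t := by gcongr

end OrderedSemiring

theorem stmt_0 (r : ℕ) (hr : 0 < r) (x : Fin r → ℝ) (n : Fin r → ℕ)
    (hx : ∀ i, x i ∈ Set.Icc (0 : ℝ) 1)
    (hmin : ∀ i, x ⟨0, hr⟩ ≤ x i)
    (hn : 1 ≤ ∑ t, n t) :
    x ⟨0, hr⟩ +
      ∑ i ∈ Finset.univ.erase ⟨0, hr⟩,
        (x i - x ⟨0, hr⟩) * (n i : ℝ) * (1 - x i) ^ (n i - 1) *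
          ∏ t ∈ Finset.univ.erase i, (1 - x t) ^ (n t)
      ≤ 1 - ∏ t, (1 - x t) ^ (n t) := by
  have key := prod_pow_add_sum_le_prod_add_pow (b := fun t ↦ 1 - x t)
    (d := fun t ↦ x t - x ⟨0, hr⟩) (fun t ↦ sub_nonneg.2 (hx t).2)
    (fun t ↦ sub_nonneg.2 (hmin t)) n univ
  simp only [sub_add_sub_cancel] at key
  rw [prod_pow_eq_pow_sum, ← sum_erase univ (a := ⟨0, hr⟩) (by simp)] at key
  have hpow : (1 - x ⟨0, hr⟩) ^ ∑ t, n t ≤ 1 - x ⟨0, hr⟩ :=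
    pow_le_of_le_one (sub_nonneg.2 (hx _).2) (sub_le_self _ (hx _).1) (by omega)
  linarith
end

section
/- With f₁(x) = exp(-λ p_b exp(-λ p_r x)) and f₂(x) = exp(-λ q_r exp(-λ q_b x)), if λ⁴ p_b p_r q_b q_r · exp(-λ p_r e^{-λ q_r} - λ p_b exp(-λ p_r exp(-λ q_r e^{-λ q_b})) - λ q_r e^{-λ q_b}) < 1, then x ↦ f₁(f₂(x)) - x is strictly decreasing on [0,1] and hence f₁ ∘ f₂ has exactly one fixed point in [0,1]. -/
theorem stmt_15 (lam pb pr qb qr : ℝ) (hlam : 0 < lam)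
    (hpb : pb ∈ Set.Ioo (0 : ℝ) 1) (hpr : pr ∈ Set.Ioo (0 : ℝ) 1)
    (hqb : qb ∈ Set.Ioo (0 : ℝ) 1) (hqr : qr ∈ Set.Ioo (0 : ℝ) 1)
    (hp : pb + pr = 1) (hq : qb + qr = 1)
    (f₁ : ℝ → ℝ) (f₂ : ℝ → ℝ)
    (hf₁ : f₁ = fun x => Real.exp (-lam * pb * Real.exp (-lam * pr * x)))
    (hf₂ : f₂ = fun x => Real.exp (-lam * qr * Real.exp (-lam * qb * x)))
    (hcond : lam^4 * pb * pr * qb * qr *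
        Real.exp (-lam * pr * Real.exp (-lam * qr)
          - lam * pb * Real.exp (-lam * pr * Real.exp (-lam * qr * Real.exp (-lam * qb)))
          - lam * qr * Real.exp (-lam * qb)) < 1) :
    StrictAntiOn (fun x => f₁ (f₂ x) - x) (Set.Icc (0 : ℝ) 1) ∧
      ∃! x, x ∈ Set.Icc (0 : ℝ) 1 ∧ f₁ (f₂ x) = x := by
  obtain ⟨hpb0, hpb1⟩ := hpb
  obtain ⟨hpr0, hpr1⟩ := hpr
  obtain ⟨hqb0, hqb1⟩ := hqb
  obtain ⟨hqr0, hqr1⟩ := hqr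
  subst hf₁ hf₂
  set g : ℝ → ℝ := fun x =>
    Real.exp (-lam * pb * Real.exp (-lam * pr *
      Real.exp (-lam * qr * Real.exp (-lam * qb * x)))) - x with hg
  set c : ℝ := lam^4 * pb * pr * qb * qr with hc
  have hcpos : 0 < c := by positivity
  -- derivative
  have key : ∀ x : ℝ, HasDerivAt g
      (c * (Real.exp (-lam * pr * Real.exp (-lam * qr * Real.exp (-lam * qb * x)))
          * Real.exp (-lam * pb * Real.exp (-lam * pr *
              Real.exp (-lam * qr * Real.exp (-lam * qb * x))))
          * Real.exp (-lam * qb * x)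
          * Real.exp (-lam * qr * Real.exp (-lam * qb * x))) - 1) x := by
    intro x
    have h1 : HasDerivAt (fun x : ℝ => -lam * qb * x) (-lam * qb) x := by
      simpa using (hasDerivAt_id x).const_mul (-lam * qb)
    have h2 := (h1.exp).const_mul (-lam * qr)
    have h3 := (h2.exp).const_mul (-lam * pr)
    have h4 := (h3.exp).const_mul (-lam * pb)
    have h5 := (h4.exp).sub (hasDerivAt_id x)
    refine h5.congr_deriv ?_
    simp only [hc]
    ring
  -- bound on derivative
  have hbound : ∀ x ∈ Set.Icc (0:ℝ) 1,
      c * (Real.exp (-lam * pr * Real.exp (-lam * qr * Real.exp (-lam * qb * x)))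
          * Real.exp (-lam * pb * Real.exp (-lam * pr *
              Real.exp (-lam * qr * Real.exp (-lam * qb * x))))
          * Real.exp (-lam * qb * x)
          * Real.exp (-lam * qr * Real.exp (-lam * qb * x))) - 1 < 0 := by
    intro x ⟨hx0, hx1⟩
    have he1 : Real.exp (-lam * qb * x) ≤ 1 := by
      apply Real.exp_le_one_iff.mpr
      nlinarith [mul_nonneg (mul_nonneg hlam.le hqb0.le) hx0]
    have he1' : Real.exp (-lam * qb) ≤ Real.exp (-lam * qb * x) := by
      apply Real.exp_le_exp.mpr
      nlinarith [mul_le_mul_of_nonneg_left hx1 (mul_nonneg hlam.le hqb0.le)]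
    have hf2lb : Real.exp (-lam * qr) ≤ Real.exp (-lam * qr * Real.exp (-lam * qb * x)) := by
      apply Real.exp_le_exp.mpr
      nlinarith [mul_le_mul_of_nonneg_left he1 (mul_nonneg hlam.le hqr0.le)]
    have hf2ub : Real.exp (-lam * qr * Real.exp (-lam * qb * x))
        ≤ Real.exp (-lam * qr * Real.exp (-lam * qb)) := by
      apply Real.exp_le_exp.mpr
      nlinarith [mul_le_mul_of_nonneg_left he1' (mul_nonneg hlam.le hqr0.le)]
    have hA : Real.exp (-lam * pr * Real.exp (-lam * qr * Real.exp (-lam * qb * x)))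
        ≤ Real.exp (-lam * pr * Real.exp (-lam * qr)) := by
      apply Real.exp_le_exp.mpr
      nlinarith [mul_le_mul_of_nonneg_left hf2lb (mul_nonneg hlam.le hpr0.le)]
    have hB : Real.exp (-lam * pb * Real.exp (-lam * pr *
        Real.exp (-lam * qr * Real.exp (-lam * qb * x))))
        ≤ Real.exp (-lam * pb * Real.exp (-lam * pr *
            Real.exp (-lam * qr * Real.exp (-lam * qb)))) := by
      apply Real.exp_le_exp.mpr
      have : Real.exp (-lam * pr * Real.exp (-lam * qr * Real.exp (-lam * qb)))
          ≤ Real.exp (-lam * pr * Real.exp (-lam * qr * Real.exp (-lam * qb * x))) := by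
        apply Real.exp_le_exp.mpr
        nlinarith [mul_le_mul_of_nonneg_left hf2ub (mul_nonneg hlam.le hpr0.le)]
      nlinarith [mul_le_mul_of_nonneg_left this (mul_nonneg hlam.le hpb0.le)]
    have hsplit : Real.exp (-lam * pr * Real.exp (-lam * qr)
          - lam * pb * Real.exp (-lam * pr * Real.exp (-lam * qr * Real.exp (-lam * qb)))
          - lam * qr * Real.exp (-lam * qb))
        = Real.exp (-lam * pr * Real.exp (-lam * qr))
          * Real.exp (-lam * pb * Real.exp (-lam * pr *
              Real.exp (-lam * qr * Real.exp (-lam * qb))))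
          * Real.exp (-lam * qr * Real.exp (-lam * qb)) := by
      rw [← Real.exp_add, ← Real.exp_add]; ring_nf
    have hprod : Real.exp (-lam * pr * Real.exp (-lam * qr * Real.exp (-lam * qb * x)))
          * Real.exp (-lam * pb * Real.exp (-lam * pr *
              Real.exp (-lam * qr * Real.exp (-lam * qb * x))))
          * Real.exp (-lam * qb * x)
          * Real.exp (-lam * qr * Real.exp (-lam * qb * x))
        ≤ Real.exp (-lam * pr * Real.exp (-lam * qr))
          * Real.exp (-lam * pb * Real.exp (-lam * pr *
              Real.exp (-lam * qr * Real.exp (-lam * qb))))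
          * 1
          * Real.exp (-lam * qr * Real.exp (-lam * qb)) := by
      gcongr <;> positivity
    have : c * (Real.exp (-lam * pr * Real.exp (-lam * qr * Real.exp (-lam * qb * x)))
          * Real.exp (-lam * pb * Real.exp (-lam * pr *
              Real.exp (-lam * qr * Real.exp (-lam * qb * x))))
          * Real.exp (-lam * qb * x)
          * Real.exp (-lam * qr * Real.exp (-lam * qb * x)))
        ≤ c * Real.exp (-lam * pr * Real.exp (-lam * qr)
          - lam * pb * Real.exp (-lam * pr * Real.exp (-lam * qr * Real.exp (-lam * qb)))
          - lam * qr * Real.exp (-lam * qb)) := by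
      rw [hsplit]
      apply mul_le_mul_of_nonneg_left _ hcpos.le
      linarith [hprod]
    linarith [hcond]
  -- strict anti
  have hsa : StrictAntiOn g (Set.Icc (0:ℝ) 1) := by
    apply strictAntiOn_of_deriv_neg (convex_Icc 0 1)
    · exact fun x _ => ((key x).differentiableAt.continuousAt).continuousWithinAt
    · intro x hx
      rw [interior_Icc] at hx
      rw [(key x).deriv]
      exact hbound x ⟨hx.1.le, hx.2.le⟩
  refine ⟨hsa, ?_⟩
  -- existence via IVT
  have hcont : ContinuousOn g (Set.Icc (0:ℝ) 1) :=
    fun x _ => ((key x).differentiableAt.continuousAt).continuousWithinAt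
  have hg0 : 0 < g 0 := by
    simp only [hg]
    have := Real.exp_pos (-lam * pb * Real.exp (-lam * pr *
      Real.exp (-lam * qr * Real.exp (-lam * qb * 0))))
    linarith
  have hg1 : g 1 < 0 := by
    simp only [hg]
    have h : -lam * pb * Real.exp (-lam * pr *
        Real.exp (-lam * qr * Real.exp (-lam * qb * 1))) < 0 := by
      have h0 := Real.exp_pos (-lam * pr * Real.exp (-lam * qr * Real.exp (-lam * qb * 1)))
      nlinarith [mul_pos (mul_pos hlam hpb0) h0]
    have := Real.exp_lt_one_iff.mpr h
    linarith
  have hmem : (0:ℝ) ∈ Set.Icc (g 1) (g 0) := ⟨hg1.le, hg0.le⟩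
  obtain ⟨x, hxmem, hx⟩ := intermediate_value_Icc' (by norm_num : (0:ℝ) ≤ 1) hcont hmem
  refine ⟨x, ⟨hxmem, by simpa [hg, sub_eq_zero] using hx⟩, ?_⟩
  rintro y ⟨hymem, hy⟩
  have hgy : g y = 0 := by
    have hy' : Real.exp (-lam * pb * Real.exp (-lam * pr *
        Real.exp (-lam * qr * Real.exp (-lam * qb * y)))) = y := hy
    simp only [hg]
    rw [hy', sub_self]
  have hgx : g x = 0 := hx
  exact hsa.injOn hymem hxmem (by rw [hgy, hgx])
end
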